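/- (Negativity of the derivative of the optimal threshold.) For every ρ ∈ ℝ, ( φ(ρ) + Φ(ρ)·ρ )·( φ(ρ) − Φ(−ρ)·ρ ) < Φ(ρ)·Φ(−ρ). Equivalently, the derivative dα̂₀(ρ)/dρ = ( (f + p·ρ)·(f − q·ρ) − q·p ) / f of the estimated optimal acceptance threshold α̂₀(ρ) = Φ(ρ)·(1 − ρ·Φ(−ρ)/φ(ρ)) is strictly negative for all ρ, where p = Φ(ρ), q = Φ(−ρ), f = φ(ρ). -/

import Mathlib

/-!
Write `p = Φ x`, `q = Φ (-x)`, `f = φ x`. The gap `pq - (f + px)(f - qx)` is even in `x`, and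
differentiating with `p' = f`, `q' = -f`, `f' = -xf` gives the chain `gap' = 2 gap₁`,
`gap₁' = gap₂`, `gap₂' = f gap₃`, `gap₃' = 2f(1 - 2x²)`, where, by the Mills ratio bound `x q ≤ f`,
`gap, gap₁, gap₂, gap₃` tend to `0, 0, 0, -1` at `+∞`. Signs are read off on `[0, ∞)` from the
bottom up: `gap₃` rises, then falls towards `-1`, so it changes sign once, from `+` to `-`; hence
`gap₂`, going from `1/4 - 1/π < 0` to `0`, changes sign once, from `-` to `+`; hence `gap₁`,
vanishing at both ends, is negative on `(0, ∞)`; hence `gap` decreases strictly to `0` and is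
positive.
-/

open MeasureTheory ProbabilityTheory

/-- The standard normal density φ(t) = (2π)^{-1/2} e^{-t²/2}. -/
noncomputable def stdNormalPDF (t : ℝ) : ℝ :=
  (Real.sqrt (2 * Real.pi))⁻¹ * Real.exp (-t ^ 2 / 2)

/-- The standard normal distribution function Φ(x) = ∫_{-∞}^x φ(t) dt. -/
noncomputable def stdNormalCDF (x : ℝ) : ℝ :=
  ∫ t in Set.Iic x, stdNormalPDF t

open Real Set Filter Topology

section Unimodal

variable {g g' : ℝ → ℝ} {a c : ℝ}

lemma StrictAntiOn.lt_of_tendsto_atTop {l x : ℝ} (hg : StrictAntiOn g (Ici a))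
    (hlim : Tendsto g atTop (𝓝 l)) (hx : a ≤ x) : l < g x := by
  have hx1 : a ≤ x + 1 := by linarith
  calc l ≤ g (x + 1) := le_of_tendsto hlim <| (eventually_ge_atTop (x + 1)).mono
          fun y hy => hg.antitoneOn hx1 (hx1.trans hy) hy
    _ < g x := hg hx hx1 (by linarith)

variable (hg : ∀ x, HasDerivAt g (g' x) x)
include hg

lemma strictMonoOn_Icc_of_hasDerivAt_pos (h : ∀ x ∈ Ioo a c, 0 < g' x) :
    StrictMonoOn g (Icc a c) :=
  strictMonoOn_of_hasDerivWithinAt_pos (convex_Icc a c)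
    (fun x _ => (hg x).continuousAt.continuousWithinAt) (fun x _ => (hg x).hasDerivWithinAt)
    (by simpa using h)

lemma strictAntiOn_Ici_of_hasDerivAt_neg (h : ∀ x > c, g' x < 0) : StrictAntiOn g (Ici c) :=
  strictAntiOn_of_hasDerivWithinAt_neg (convex_Ici c)
    (fun x _ => (hg x).continuousAt.continuousWithinAt) (fun x _ => (hg x).hasDerivWithinAt)
    (by simpa using h)

variable (hpos : ∀ x ∈ Ioo a c, 0 < g' x) (hneg : ∀ x > c, g' x < 0)
include hpos hneg

lemma unimodal_pos_of_tendsto_zero (ha : g a = 0) (hlim : Tendsto g atTop (𝓝 0)) {x : ℝ}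
    (hx : a < x) : 0 < g x := by
  rcases le_total x c with hxc | hcx
  · rw [← ha]
    exact strictMonoOn_Icc_of_hasDerivAt_pos hg hpos ⟨le_rfl, hx.le.trans hxc⟩ ⟨hx.le, hxc⟩ hx
  · exact (strictAntiOn_Ici_of_hasDerivAt_neg hg hneg).lt_of_tendsto_atTop hlim hcx

lemma unimodal_exists_sign_change_of_eventually_neg (hac : a ≤ c) (ha : g a = 0)
    (hev : ∀ᶠ x in atTop, g x < 0) :
    ∃ z ≥ a, (∀ x ∈ Ioo a z, 0 < g x) ∧ ∀ x > z, g x < 0 := by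
  have hmono := strictMonoOn_Icc_of_hasDerivAt_pos hg hpos
  have hanti := strictAntiOn_Ici_of_hasDerivAt_neg hg hneg
  obtain ⟨t, ht, hct⟩ := (hev.and (eventually_ge_atTop c)).exists
  have hc : 0 ≤ g c := ha ▸ hmono.monotoneOn ⟨le_rfl, hac⟩ ⟨hac, le_rfl⟩ hac
  obtain ⟨z, ⟨hcz, hzt⟩, hz⟩ := intermediate_value_Icc' hct
    (fun x _ => (hg x).continuousAt.continuousWithinAt) ⟨ht.le, hc⟩
  refine ⟨z, hac.trans hcz, fun x ⟨hax, hxz⟩ => ?_, fun x hzx => ?_⟩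
  · rcases le_total x c with hxc | hcx
    · rw [← ha]
      exact hmono ⟨le_rfl, hac⟩ ⟨hax.le, hxc⟩ hax
    · rw [← hz]
      exact hanti hcx hcz hxz
  · rw [← hz]
    exact hanti hcz (hcz.trans hzx.le) hzx

lemma unimodal_exists_sign_change_of_tendsto_zero (hac : a ≤ c) (ha : g a < 0)
    (hlim : Tendsto g atTop (𝓝 0)) :
    ∃ b, (∀ x ∈ Ioo a b, g x < 0) ∧ ∀ x > b, 0 < g x := by
  have hmono := strictMonoOn_Icc_of_hasDerivAt_pos hg hpos
  have htail : ∀ x ≥ c, 0 < g x := fun x hx =>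
    (strictAntiOn_Ici_of_hasDerivAt_neg hg hneg).lt_of_tendsto_atTop hlim hx
  obtain ⟨b, ⟨hab, hbc⟩, hb⟩ := intermediate_value_Icc hac
    (fun x _ => (hg x).continuousAt.continuousWithinAt) ⟨ha.le, (htail c le_rfl).le⟩
  refine ⟨b, fun x ⟨hax, hxb⟩ => ?_, fun x hbx => ?_⟩
  · rw [← hb]
    exact hmono ⟨hax.le, hxb.le.trans hbc⟩ ⟨hab, hbc⟩ hxb
  · rcases le_total x c with hxc | hcx
    · rw [← hb]
      exact hmono ⟨hab, hbc⟩ ⟨hab.trans hbx.le, hxc⟩ hbx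
    · exact htail x hcx

end Unimodal

local notation "φ" => stdNormalPDF
local notation "Φ" => stdNormalCDF

lemma stdNormalPDF_eq_gaussianPDFReal : φ = gaussianPDFReal 0 1 := by
  ext t
  simp [stdNormalPDF, gaussianPDFReal]

lemma stdNormalPDF_pos (t : ℝ) : 0 < φ t := by
  unfold stdNormalPDF
  positivity

lemma stdNormalPDF_neg (t : ℝ) : φ (-t) = φ t := by
  simp [stdNormalPDF]

lemma integrable_stdNormalPDF : Integrable φ := by
  rw [stdNormalPDF_eq_gaussianPDFReal]
  exact integrable_gaussianPDFReal 0 1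

lemma integral_stdNormalPDF : ∫ t, φ t = 1 := by
  rw [stdNormalPDF_eq_gaussianPDFReal]
  exact integral_gaussianPDFReal_eq_one 0 one_ne_zero

lemma hasDerivAt_stdNormalPDF (t : ℝ) : HasDerivAt φ (-t * φ t) t := by
  have h := (((hasDerivAt_pow 2 t).fun_neg.div_const 2).exp).const_mul (√(2 * π))⁻¹
  refine h.congr_deriv ?_
  simp only [stdNormalPDF]
  ring

lemma continuous_stdNormalPDF : Continuous φ :=
  continuous_iff_continuousAt.2 fun t => (hasDerivAt_stdNormalPDF t).continuousAt

lemma tendsto_pow_mul_stdNormalPDF (k : ℕ) :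
    Tendsto (fun x => x ^ k * φ x) atTop (𝓝 0) := by
  have h := ((rpow_mul_exp_neg_mul_sq_isLittleO_exp_neg (by norm_num : (0 : ℝ) < 1 / 2)
    k).trans_tendsto (tendsto_exp_atBot.comp
      (tendsto_id.const_mul_atTop_of_neg (by norm_num)))).const_mul (√(2 * π))⁻¹
  rw [mul_zero] at h
  refine h.congr fun x => ?_
  simp only [stdNormalPDF, rpow_natCast]
  ring_nf

lemma integrable_mul_stdNormalPDF : Integrable fun t => t * φ t := by
  refine ((integrable_mul_exp_neg_mul_sq (by norm_num : (0 : ℝ) < 1 / 2)).const_mul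
    (√(2 * π))⁻¹).congr (Eventually.of_forall fun t => ?_)
  simp only [stdNormalPDF]
  ring_nf

lemma integral_Ioi_mul_stdNormalPDF (x : ℝ) : ∫ t in Ioi x, t * φ t = φ x := by
  have h := integral_Ioi_of_hasDerivAt_of_tendsto (f := fun t => -φ t) (a := x)
    continuous_stdNormalPDF.neg.continuousWithinAt
    (fun t _ => (hasDerivAt_stdNormalPDF t).neg.congr_deriv (by ring))
    integrable_mul_stdNormalPDF.integrableOn
    (by simpa using (tendsto_pow_mul_stdNormalPDF 0).neg)
  simpa using h

lemma stdNormalCDF_sub_stdNormalCDF (x y : ℝ) : Φ y - Φ x = ∫ t in x..y, φ t :=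
  intervalIntegral.integral_Iic_sub_Iic integrable_stdNormalPDF.integrableOn
    integrable_stdNormalPDF.integrableOn

lemma hasDerivAt_stdNormalCDF (x : ℝ) : HasDerivAt Φ (φ x) x := by
  have h := (intervalIntegral.integral_hasDerivAt_right
    (continuous_stdNormalPDF.intervalIntegrable 0 x)
    (continuous_stdNormalPDF.stronglyMeasurableAtFilter _ _)
    continuous_stdNormalPDF.continuousAt).const_add (Φ 0)
  refine h.congr_of_eventuallyEq (Eventually.of_forall fun y => ?_)
  simp [← stdNormalCDF_sub_stdNormalCDF]

lemma hasDerivAt_stdNormalCDF_neg (x : ℝ) : HasDerivAt (fun x => Φ (-x)) (-φ x) x := by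
  simpa [stdNormalPDF_neg, Function.comp_def] using
    (hasDerivAt_stdNormalCDF (-x)).comp x (hasDerivAt_neg x)

lemma stdNormalCDF_neg (x : ℝ) : Φ (-x) = ∫ t in Ioi x, φ t := by
  rw [stdNormalCDF, ← neg_neg x, ← integral_comp_neg_Iic]
  simp [stdNormalPDF_neg]

lemma stdNormalCDF_add_stdNormalCDF_neg (x : ℝ) : Φ x + Φ (-x) = 1 := by
  rw [stdNormalCDF_neg, stdNormalCDF, intervalIntegral.integral_Iic_add_Ioi
    integrable_stdNormalPDF.integrableOn integrable_stdNormalPDF.integrableOn,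
    integral_stdNormalPDF]

lemma stdNormalCDF_pos (x : ℝ) : 0 < Φ x := by
  rw [stdNormalCDF, setIntegral_pos_iff_support_of_nonneg_ae
    (Eventually.of_forall fun t => (stdNormalPDF_pos t).le) integrable_stdNormalPDF.integrableOn]
  simp [Function.support, fun t => (stdNormalPDF_pos t).ne']

lemma mul_stdNormalCDF_neg_le (x : ℝ) : x * Φ (-x) ≤ φ x := by
  rw [← integral_Ioi_mul_stdNormalPDF, stdNormalCDF_neg, ← integral_const_mul]
  refine setIntegral_mono_on (integrable_stdNormalPDF.const_mul x).integrableOn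
    integrable_mul_stdNormalPDF.integrableOn measurableSet_Ioi fun t ht => ?_
  exact mul_le_mul_of_nonneg_right (le_of_lt ht) (stdNormalPDF_pos t).le

lemma tendsto_pow_succ_mul_stdNormalCDF_neg (k : ℕ) :
    Tendsto (fun x => x ^ (k + 1) * Φ (-x)) atTop (𝓝 0) := by
  refine squeeze_zero' ?_ ?_ (tendsto_pow_mul_stdNormalPDF k)
  · filter_upwards [eventually_ge_atTop 0] with x hx
    exact mul_nonneg (pow_nonneg hx _) (stdNormalCDF_pos _).le
  · filter_upwards [eventually_ge_atTop 0] with x hx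
    rw [pow_succ, mul_assoc]
    exact mul_le_mul_of_nonneg_left (mul_stdNormalCDF_neg_le x) (pow_nonneg hx _)

lemma tendsto_stdNormalCDF_neg : Tendsto (fun x => Φ (-x)) atTop (𝓝 0) := by
  refine squeeze_zero' (Eventually.of_forall fun x => (stdNormalCDF_pos _).le) ?_
    (by simpa using tendsto_pow_succ_mul_stdNormalCDF_neg 0)
  filter_upwards [eventually_ge_atTop 1] with x hx
  simpa using le_mul_of_one_le_left (stdNormalCDF_pos (-x)).le hx

lemma tendsto_stdNormalCDF : Tendsto Φ atTop (𝓝 1) := by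
  have h := tendsto_stdNormalCDF_neg.const_sub 1
  rw [sub_zero] at h
  exact h.congr fun x => by linarith [stdNormalCDF_add_stdNormalCDF_neg x]

namespace OptimalThreshold

noncomputable def gap (x : ℝ) : ℝ :=
  Φ x * Φ (-x) - (φ x + Φ x * x) * (φ x - Φ (-x) * x)

noncomputable def gap₁ (x : ℝ) : ℝ :=
  x * Φ x * Φ (-x) - φ x * (Φ x - Φ (-x))

noncomputable def gap₂ (x : ℝ) : ℝ :=
  Φ x * Φ (-x) - 2 * φ x ^ 2

noncomputable def gap₃ (x : ℝ) : ℝ :=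
  Φ (-x) - Φ x + 4 * x * φ x

lemma hasDerivAt_gap (x : ℝ) : HasDerivAt gap (2 * gap₁ x) x := by
  have hp := hasDerivAt_stdNormalCDF x
  have hq := hasDerivAt_stdNormalCDF_neg x
  have hf := hasDerivAt_stdNormalPDF x
  refine ((hp.mul hq).sub ((hf.add (hp.mul (hasDerivAt_id' x))).mul
    (hf.sub (hq.mul (hasDerivAt_id' x))))).congr_deriv ?_
  simp only [gap₁, Pi.add_apply, Pi.sub_apply, Pi.mul_apply]
  ring

lemma hasDerivAt_gap₁ (x : ℝ) : HasDerivAt gap₁ (gap₂ x) x := by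
  have hp := hasDerivAt_stdNormalCDF x
  have hq := hasDerivAt_stdNormalCDF_neg x
  have hf := hasDerivAt_stdNormalPDF x
  refine ((((hasDerivAt_id' x).mul hp).mul hq).sub (hf.mul (hp.sub hq))).congr_deriv ?_
  simp only [gap₂, Pi.sub_apply, Pi.mul_apply]
  ring

lemma hasDerivAt_gap₂ (x : ℝ) : HasDerivAt gap₂ (φ x * gap₃ x) x := by
  have hp := hasDerivAt_stdNormalCDF x
  have hq := hasDerivAt_stdNormalCDF_neg x
  have hf := hasDerivAt_stdNormalPDF x
  refine ((hp.mul hq).sub ((hf.pow 2).const_mul 2)).congr_deriv ?_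
  simp only [gap₃]
  ring

lemma hasDerivAt_gap₃ (x : ℝ) : HasDerivAt gap₃ (2 * φ x * (1 - 2 * x ^ 2)) x := by
  have hp := hasDerivAt_stdNormalCDF x
  have hq := hasDerivAt_stdNormalCDF_neg x
  have hf := hasDerivAt_stdNormalPDF x
  refine ((hq.sub hp).add (((hasDerivAt_id' x).const_mul 4).mul hf)).congr_deriv ?_
  ring

lemma gap_neg (x : ℝ) : gap (-x) = gap x := by
  simp only [gap, neg_neg, stdNormalPDF_neg]
  ring

lemma gap₂_zero_neg : gap₂ 0 < 0 := by
  have hp : Φ 0 = 1 / 2 := by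
    linarith [show Φ 0 + Φ 0 = 1 by simpa using stdNormalCDF_add_stdNormalCDF_neg 0]
  have hf : φ 0 ^ 2 = π⁻¹ / 2 := by
    rw [stdNormalPDF, mul_pow, inv_pow, sq_sqrt (by positivity)]
    norm_num [div_eq_mul_inv, mul_comm]
  have : (4 : ℝ)⁻¹ < π⁻¹ := inv_strictAnti₀ pi_pos pi_lt_four
  simp only [gap₂, neg_zero, hp, hf]
  linarith

lemma tendsto_gap : Tendsto gap atTop (𝓝 0) := by
  have h := (((tendsto_stdNormalCDF.mul tendsto_stdNormalCDF_neg).sub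
    ((tendsto_pow_mul_stdNormalPDF 0).mul (tendsto_pow_mul_stdNormalPDF 0))).add
    (((tendsto_pow_mul_stdNormalPDF 1).mul tendsto_stdNormalCDF_neg).sub
      ((tendsto_pow_mul_stdNormalPDF 1).mul tendsto_stdNormalCDF))).add
    (tendsto_stdNormalCDF.mul (tendsto_pow_succ_mul_stdNormalCDF_neg 1))
  convert h using 2 with x
  · simp only [gap]
    ring
  · norm_num

lemma tendsto_gap₁ : Tendsto gap₁ atTop (𝓝 0) := by
  have h := ((tendsto_pow_succ_mul_stdNormalCDF_neg 0).mul tendsto_stdNormalCDF).sub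
    ((tendsto_pow_mul_stdNormalPDF 0).mul (tendsto_stdNormalCDF.sub tendsto_stdNormalCDF_neg))
  convert h using 2 with x
  · simp only [gap₁]
    ring
  · norm_num

lemma tendsto_gap₂ : Tendsto gap₂ atTop (𝓝 0) := by
  have h := (tendsto_stdNormalCDF.mul tendsto_stdNormalCDF_neg).sub
    (((tendsto_pow_mul_stdNormalPDF 0).pow 2).const_mul 2)
  convert h using 2 with x
  · simp only [gap₂]
    ring
  · norm_num

lemma tendsto_gap₃ : Tendsto gap₃ atTop (𝓝 (-1)) := by
  have h := (tendsto_stdNormalCDF_neg.sub tendsto_stdNormalCDF).add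
    ((tendsto_pow_mul_stdNormalPDF 1).const_mul 4)
  convert h using 2 with x
  · simp only [gap₃]
    ring
  · norm_num

lemma exists_gap₃_sign_change : ∃ z ≥ 0, (∀ x ∈ Ioo 0 z, 0 < gap₃ x) ∧ ∀ x > z, gap₃ x < 0 := by
  refine unimodal_exists_sign_change_of_eventually_neg hasDerivAt_gap₃ (c := √2⁻¹)
    (fun x ⟨hx0, hx⟩ => ?_) (fun x hx => ?_) (by positivity) (by simp [gap₃])
    (tendsto_gap₃.eventually (gt_mem_nhds (by norm_num)))
  · have := (lt_sqrt hx0.le).1 hx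
    have := stdNormalPDF_pos x
    nlinarith
  · have := (sqrt_lt' ((sqrt_nonneg _).trans_lt hx)).1 hx
    have := stdNormalPDF_pos x
    nlinarith

lemma exists_gap₂_sign_change : ∃ b, (∀ x ∈ Ioo 0 b, gap₂ x < 0) ∧ ∀ x > b, 0 < gap₂ x := by
  obtain ⟨z, hz, hpos, hneg⟩ := exists_gap₃_sign_change
  exact unimodal_exists_sign_change_of_tendsto_zero hasDerivAt_gap₂
    (fun x hx => mul_pos (stdNormalPDF_pos x) (hpos x hx))
    (fun x hx => mul_neg_of_pos_of_neg (stdNormalPDF_pos x) (hneg x hx)) hz gap₂_zero_neg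
    tendsto_gap₂

lemma gap₁_neg {x : ℝ} (hx : 0 < x) : gap₁ x < 0 := by
  obtain ⟨b, hneg, hpos⟩ := exists_gap₂_sign_change
  have := unimodal_pos_of_tendsto_zero (g := fun x => -gap₁ x) (fun x => (hasDerivAt_gap₁ x).neg)
    (fun x hx => neg_pos.2 (hneg x hx)) (fun x hx => neg_lt_zero.2 (hpos x hx))
    (by simp [gap₁]) (by simpa using tendsto_gap₁.neg) hx
  exact neg_pos.1 this

lemma gap_pos_of_nonneg {x : ℝ} (hx : 0 ≤ x) : 0 < gap x :=
  (strictAntiOn_Ici_of_hasDerivAt_neg hasDerivAt_gap fun y hy => by linarith [gap₁_neg hy]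
    ).lt_of_tendsto_atTop tendsto_gap hx

lemma gap_pos (x : ℝ) : 0 < gap x := by
  rcases le_total 0 x with hx | hx
  · exact gap_pos_of_nonneg hx
  · rw [← gap_neg]
    exact gap_pos_of_nonneg (neg_nonneg.2 hx)

end OptimalThreshold

/-- Negativity of the derivative of the estimated optimal threshold:
(f + pρ)(f − qρ) < qp, equivalently ((f + pρ)(f − qρ) − qp)/f < 0,
where p = Φ(ρ), q = Φ(−ρ), f = φ(ρ). -/
theorem deriv_optThreshold_neg (ρ : ℝ) (p q f : ℝ)
    (hp : p = stdNormalCDF ρ) (hq : q = stdNormalCDF (-ρ)) (hf : f = stdNormalPDF ρ) :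
    (f + p * ρ) * (f - q * ρ) < p * q ∧
      ((f + p * ρ) * (f - q * ρ) - q * p) / f < 0 := by
  subst hp hq hf
  have hgap := sub_pos.1 (OptimalThreshold.gap_pos ρ)
  refine ⟨hgap, div_neg_of_neg_of_pos ?_ (stdNormalPDF_pos ρ)⟩
  linarith [mul_comm (Φ ρ) (Φ (-ρ))]
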